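/- For any positive integers a, b, c, the polynomial T(q) = [a]_q · [b]_q · [c]_{q^2} is symmetric and unimodal if and only if 2c ≤ a + b, or a is even, or b is even. -/
import Mathlib

open Polynomial

/-- The q-analog `[n]_q = 1 + q + ⋯ + q^(n-1)` as a polynomial in `ℤ[q]`. -/
noncomputable def qAnalog (n : ℕ) : Polynomial ℤ :=
  ∑ i ∈ Finset.range n, X ^ i

/-- The q-analog `[n]_{q^r} = 1 + q^r + ⋯ + q^(r(n-1))` as a polynomial in `ℤ[q]`. -/
noncomputable def qAnalogPow (n r : ℕ) : Polynomial ℤ :=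
  ∑ i ∈ Finset.range n, X ^ (r * i)

/-- A polynomial of degree `d` is symmetric if `c_k = c_{d-k}` for all `0 ≤ k ≤ d`. -/
def IsSymmPoly (P : Polynomial ℤ) : Prop :=
  ∀ k ≤ P.natDegree, P.coeff k = P.coeff (P.natDegree - k)

/-- A polynomial is unimodal if its coefficient sequence increases up to some
index `M` and decreases afterwards. -/
def IsUnimodalPoly (P : Polynomial ℤ) : Prop :=
  ∃ M : ℕ, (∀ k, k < M → P.coeff k ≤ P.coeff (k + 1)) ∧
    (∀ k, M ≤ k → P.coeff (k + 1) ≤ P.coeff k)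

/-- Number of `l < c` with `2l ≤ m < 2l + b`. -/
def Ncnt (b c m : ℕ) : ℕ := min c (m / 2 + 1) - (m + 2 - b) / 2

lemma coeff_qAnalog (n k : ℕ) : (qAnalog n).coeff k = if k < n then 1 else 0 := by
  simp only [qAnalog, finset_sum_coeff, coeff_X_pow]
  rw [Finset.sum_ite_eq (Finset.range n) k fun _ => (1 : ℤ)]
  simp [Finset.mem_range]

lemma coeff_qAnalogPow2 (c k : ℕ) :
    (qAnalogPow c 2).coeff k = if k % 2 = 0 ∧ k < 2 * c then 1 else 0 := by
  simp only [qAnalogPow, finset_sum_coeff, coeff_X_pow]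
  by_cases hk : k % 2 = 0 ∧ k < 2 * c
  · rw [if_pos hk, Finset.sum_eq_single (k / 2)]
    · rw [if_pos (by omega)]
    · intro l _ hl; rw [if_neg (by omega)]
    · intro h; exact absurd (Finset.mem_range.2 (by omega)) h
  · rw [if_neg hk]
    apply Finset.sum_eq_zero
    intro l hl
    rw [Finset.mem_range] at hl
    rw [if_neg (by omega)]

lemma qAnalog_ne_zero (n : ℕ) (hn : 1 ≤ n) : qAnalog n ≠ 0 := by
  intro h
  have h0 := coeff_qAnalog n 0
  rw [h, if_pos (by omega)] at h0
  simp at h0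

lemma qAnalogPow2_ne_zero (c : ℕ) (hc : 1 ≤ c) : qAnalogPow c 2 ≠ 0 := by
  intro h
  have h0 := coeff_qAnalogPow2 c 0
  rw [h, if_pos (by omega)] at h0
  simp at h0

lemma natDegree_qAnalog (n : ℕ) (hn : 1 ≤ n) : (qAnalog n).natDegree = n - 1 := by
  apply le_antisymm
  · rw [natDegree_le_iff_coeff_eq_zero]
    intro m hm; rw [coeff_qAnalog, if_neg (by omega)]
  · apply le_natDegree_of_ne_zero
    rw [coeff_qAnalog, if_pos (by omega)]
    norm_num

lemma natDegree_qAnalogPow2 (c : ℕ) (hc : 1 ≤ c) :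
    (qAnalogPow c 2).natDegree = 2 * c - 2 := by
  apply le_antisymm
  · rw [natDegree_le_iff_coeff_eq_zero]
    intro m hm; rw [coeff_qAnalogPow2, if_neg (by omega)]
  · apply le_natDegree_of_ne_zero
    rw [coeff_qAnalogPow2, if_pos (by omega)]
    norm_num

lemma reverse_qAnalog (n : ℕ) (hn : 1 ≤ n) : (qAnalog n).reverse = qAnalog n := by
  ext k
  rw [coeff_reverse, natDegree_qAnalog n hn]
  by_cases h : k ≤ n - 1
  · rw [revAt_le h]
    simp only [coeff_qAnalog]
    split_ifs <;> omega
  · rw [revAt_eq_self_of_lt (by omega)]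

lemma reverse_qAnalogPow2 (c : ℕ) (hc : 1 ≤ c) :
    (qAnalogPow c 2).reverse = qAnalogPow c 2 := by
  ext k
  rw [coeff_reverse, natDegree_qAnalogPow2 c hc]
  by_cases h : k ≤ 2 * c - 2
  · rw [revAt_le h]
    simp only [coeff_qAnalogPow2]
    split_ifs <;> omega
  · rw [revAt_eq_self_of_lt (by omega)]

lemma coeff_U (b c : ℕ) (m : ℕ) :
    (qAnalog b * qAnalogPow c 2).coeff m = (Ncnt b c m : ℤ) := by
  have hU : qAnalog b * qAnalogPow c 2 = ∑ l ∈ Finset.range c, qAnalog b * X ^ (2 * l) := by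
    rw [qAnalogPow, Finset.mul_sum]
  rw [hU, finset_sum_coeff]
  simp only [coeff_mul_X_pow', coeff_qAnalog]
  have h2 : ∀ l ∈ Finset.range c,
      (if 2 * l ≤ m then (if m - 2 * l < b then (1 : ℤ) else 0) else 0) =
      if l ∈ Finset.Ico ((m + 2 - b) / 2) (min c (m / 2 + 1)) then 1 else 0 := by
    intro l hl
    rw [Finset.mem_range] at hl
    simp only [Finset.mem_Ico]
    split_ifs <;> omega
  rw [Finset.sum_congr rfl h2, Finset.sum_ite_mem]
  rw [Finset.inter_eq_right.2 (by
    intro l hl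
    rw [Finset.mem_Ico] at hl
    rw [Finset.mem_range]
    omega)]
  simp [Ncnt, Nat.card_Ico]

set_option maxHeartbeats 2000000 in
lemma key1 (a b c k : ℕ) (ha : 1 ≤ a) (hb : 1 ≤ b) (hc : 1 ≤ c)
    (hcond : 2 * c ≤ a + b ∨ a % 2 = 0 ∨ b % 2 = 0)
    (hk : k ≤ (a + b + 2 * c - 3) / 2) :
    (if a ≤ k then (Ncnt b c (k - a) : ℤ) else 0) ≤ (Ncnt b c k : ℤ) := by
  simp only [Ncnt]
  split_ifs <;> rcases hcond with h | h | h <;> omega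

set_option maxHeartbeats 3000000 in
lemma key2 (a b c M : ℕ) (ha : 1 ≤ a) (hb : 1 ≤ b) (hc : 1 ≤ c)
    (h2 : a % 2 = 1) (h3 : b % 2 = 1) (h4 : a + b < 2 * c)
    (hM : M = (a + b + 2 * c - 4) / 2) :
    (((Ncnt b c M : ℤ) - (if a ≤ M then (Ncnt b c (M - a) : ℤ) else 0) = 1) ∧
      ((Ncnt b c (M - 1) : ℤ) - (if a ≤ M - 1 then (Ncnt b c (M - 1 - a) : ℤ) else 0) = -1) ∧
      2 ≤ M) ∨
    (((Ncnt b c M : ℤ) - (if a ≤ M then (Ncnt b c (M - a) : ℤ) else 0) = -1) ∧ 1 ≤ M) := by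
  simp only [Ncnt]
  rcases Nat.even_or_odd M with hp | hp
  · rw [Nat.even_iff] at hp
    left
    refine ⟨?_, ?_, by omega⟩
    · split_ifs <;> omega
    · split_ifs <;> omega
  · rw [Nat.odd_iff] at hp
    right
    refine ⟨?_, by omega⟩
    split_ifs <;> omega

theorem qAnalog_triple_prod_symm_unimodal_iff (a b c : ℕ)
    (ha : 1 ≤ a) (hb : 1 ≤ b) (hc : 1 ≤ c) :
    (IsSymmPoly (qAnalog a * qAnalog b * qAnalogPow c 2) ∧
      IsUnimodalPoly (qAnalog a * qAnalog b * qAnalogPow c 2)) ↔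
    (2 * c ≤ a + b ∨ Even a ∨ Even b) := by
  set T : Polynomial ℤ := qAnalog a * qAnalog b * qAnalogPow c 2 with hT
  set U : Polynomial ℤ := qAnalog b * qAnalogPow c 2 with hU
  have hTU : T = qAnalog a * U := by rw [hT, hU, mul_assoc]
  have hND : T.natDegree = a + b + 2 * c - 4 := by
    rw [hT, natDegree_mul (mul_ne_zero (qAnalog_ne_zero a ha) (qAnalog_ne_zero b hb))
      (qAnalogPow2_ne_zero c hc), natDegree_mul (qAnalog_ne_zero a ha) (qAnalog_ne_zero b hb),
      natDegree_qAnalog a ha, natDegree_qAnalog b hb, natDegree_qAnalogPow2 c hc]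
    omega
  have hsymm : IsSymmPoly T := by
    intro k hk
    have hrev : T.reverse = T := by
      rw [hT, reverse_mul_of_domain, reverse_mul_of_domain, reverse_qAnalog a ha,
        reverse_qAnalog b hb, reverse_qAnalogPow2 c hc]
    conv_lhs => rw [← hrev]
    rw [coeff_reverse, revAt_le hk]
  have hΔ : ∀ k : ℕ, T.coeff (k + 1) - T.coeff k =
      (Ncnt b c (k + 1) : ℤ) - (if a ≤ k + 1 then (Ncnt b c (k + 1 - a) : ℤ) else 0) := by
    intro k
    have h1 : qAnalog a * (X - 1) = X ^ a - 1 := by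
      rw [qAnalog]; exact geom_sum_mul X a
    have h2 : T * X - T = U * X ^ a - U := by
      calc T * X - T = (qAnalog a * (X - 1)) * U := by rw [hTU]; ring
        _ = (X ^ a - 1) * U := by rw [h1]
        _ = U * X ^ a - U := by ring
    have h3 := congrArg (fun p : Polynomial ℤ => p.coeff (k + 1)) h2
    simp only [coeff_sub, coeff_mul_X, coeff_mul_X_pow'] at h3
    have h4 : T.coeff (k + 1) - T.coeff k =
        U.coeff (k + 1) - (if a ≤ k + 1 then U.coeff (k + 1 - a) else 0) := by
      linarith [h3]
    rw [h4]
    by_cases hak : a ≤ k + 1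
    · rw [if_pos hak, if_pos hak, hU, coeff_U, coeff_U]
    · rw [if_neg hak, if_neg hak, hU, coeff_U]
  have hrep : ∀ k, T.coeff k =
      ∑ i ∈ Finset.range a, (if i ≤ k then (Ncnt b c (k - i) : ℤ) else 0) := by
    intro k
    have hTs : T = ∑ i ∈ Finset.range a, U * X ^ i := by
      rw [hTU, qAnalog, Finset.sum_mul]
      exact Finset.sum_congr rfl fun i _ => mul_comm _ _
    rw [hTs, finset_sum_coeff]
    refine Finset.sum_congr rfl fun i _ => ?_
    rw [coeff_mul_X_pow']
    by_cases h : i ≤ k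
    · rw [if_pos h, if_pos h, hU, coeff_U]
    · rw [if_neg h, if_neg h]
  have hnonneg : ∀ k, 0 ≤ T.coeff k := by
    intro k
    rw [hrep k]
    apply Finset.sum_nonneg
    intro i _
    split_ifs
    · exact Int.natCast_nonneg _
    · exact le_refl 0
  constructor
  · rintro ⟨-, M', hinc, hdec⟩
    by_contra hcon
    push_neg at hcon
    obtain ⟨h1, h2, h3⟩ := hcon
    rw [Nat.not_even_iff] at h2 h3
    have h4 : a + b < 2 * c := by omega
    set M := (a + b + 2 * c - 4) / 2 with hM
    have hk2 := key2 a b c M ha hb hc h2 h3 h4 hM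
    rcases hk2 with ⟨hdM, hdM1, hM2⟩ | ⟨hdM, hM1⟩
    · have e1 : T.coeff M - T.coeff (M - 1) = 1 := by
        have h := hΔ (M - 1)
        rw [show M - 1 + 1 = M from by omega] at h
        rw [h]; exact hdM
      have e2 : T.coeff (M - 1) - T.coeff (M - 2) = -1 := by
        have h := hΔ (M - 2)
        rw [show M - 2 + 1 = M - 1 from by omega] at h
        rw [h]; exact hdM1
      by_cases hcase : M - 2 < M'
      · have h := hinc (M - 2) hcase
        rw [show M - 2 + 1 = M - 1 from by omega] at h
        linarith
      · have h := hdec (M - 1) (by omega)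
        rw [show M - 1 + 1 = M from by omega] at h
        linarith
    · have e1 : T.coeff M - T.coeff (M - 1) = -1 := by
        have h := hΔ (M - 1)
        rw [show M - 1 + 1 = M from by omega] at h
        rw [h]; exact hdM
      have e2 : T.coeff (M - 1) = T.coeff (M + 1) := by
        have h := hsymm (M - 1) (by rw [hND]; omega)
        rw [h, hND, show a + b + 2 * c - 4 - (M - 1) = M + 1 from by omega]
      by_cases hcase : M - 1 < M'
      · have h := hinc (M - 1) hcase
        rw [show M - 1 + 1 = M from by omega] at h
        linarith
      · have h := hdec M (by omega)
        linarith
  · intro hcond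
    refine ⟨hsymm, ?_⟩
    have hcond' : 2 * c ≤ a + b ∨ a % 2 = 0 ∨ b % 2 = 0 := by
      rcases hcond with h | h | h
      exacts [Or.inl h, Or.inr (Or.inl (Nat.even_iff.1 h)), Or.inr (Or.inr (Nat.even_iff.1 h))]
    refine ⟨(a + b + 2 * c - 3) / 2, ?_, ?_⟩
    · intro k hk
      have h := key1 a b c (k + 1) ha hb hc hcond' (by omega)
      have h' := hΔ k
      linarith
    · intro k hk
      by_cases hkd : T.natDegree ≤ k
      · have hz : T.coeff (k + 1) = 0 := coeff_eq_zero_of_natDegree_lt (by omega)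
        rw [hz]; exact hnonneg k
      · push_neg at hkd
        have hsk : T.coeff k = T.coeff (T.natDegree - k) := hsymm k (le_of_lt hkd)
        have hsk1 : T.coeff (k + 1) = T.coeff (T.natDegree - (k + 1)) := hsymm (k + 1) hkd
        set j := T.natDegree - (k + 1) with hj
        have hj' : j = a + b + 2 * c - 4 - (k + 1) := by rw [hj, hND]
        have hjk : T.natDegree - k = j + 1 := by omega
        rw [hsk, hsk1, hjk]
        have hkd' : k < a + b + 2 * c - 4 := by rw [hND] at hkd; exact hkd
        have h := key1 a b c (j + 1) ha hb hc hcond' (by omega)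
        have h' := hΔ j
        linarith
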